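/- arXiv:1011.3781 — 2 statements merged into one kernel-verified Lean document; each statement's English description precedes it below -/
import Mathlib

section
/- Let Σ be an n×n real symmetric positive semidefinite matrix and let ρ ≥ max_{1≤i≤n} Σ_{ii}. Then for every z ∈ ℝⁿ with ‖z‖₂ ≤ 1 one has zᵀΣz − ρ·Card(z) ≤ 0; consequently the optimal value φ(ρ) = sup_{‖z‖₂≤1} (zᵀΣz − ρ·Card(z)) equals 0 and is attained at z = 0. -/
open Matrix

/-- The largest eigenvalue of a matrix, as the supremum of its (real) eigenvalues. -/
noncomputable def lambdaMax {n : ℕ} (M : Matrix (Fin n) (Fin n) ℝ) : ℝ :=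
  sSup {t : ℝ | ∃ v : Fin n → ℝ, v ≠ 0 ∧ M.mulVec v = t • v}

open Classical in
/-- `card z` is the number of nonzero coefficients of the vector `z`. -/
noncomputable def card {n : ℕ} (z : Fin n → ℝ) : ℕ :=
  (Finset.univ.filter fun i => z i ≠ 0).card

open Classical in
/-- `trPlus M` is the sum of the positive parts of the eigenvalues of a symmetric matrix `M`. -/
noncomputable def trPlus {n : ℕ} (M : Matrix (Fin n) (Fin n) ℝ) : ℝ :=
  if h : M.IsHermitian then ∑ i, max (h.eigenvalues i) 0 else 0

open Classical in
/-- `matSqrt X` is the positive semidefinite square root of a positive semidefinite matrix. -/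
noncomputable def matSqrt {n : ℕ} (X : Matrix (Fin n) (Fin n) ℝ) : Matrix (Fin n) (Fin n) ℝ :=
  if h : X.PosSemidef then
    (h.1.eigenvectorUnitary : Matrix (Fin n) (Fin n) ℝ) *
      diagonal ((RCLike.ofReal : ℝ → ℝ) ∘ (√·) ∘ h.1.eigenvalues) *
      (star h.1.eigenvectorUnitary : Matrix (Fin n) (Fin n) ℝ)
  else 0

lemma card_zero' {n : ℕ} : card (0 : Fin n → ℝ) = 0 := by
  simp [card]

lemma entry_abs_le' {n : ℕ} (S : Matrix (Fin n) (Fin n) ℝ) (hS : S.PosSemidef)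
    (ρ : ℝ) (hρ : ∀ i, S i i ≤ ρ) (i j : Fin n) : |S i j| ≤ ρ := by
  classical
  rcases eq_or_ne i j with rfl | hij
  · have h0 := hS.dotProduct_mulVec_nonneg (Pi.single i 1)
    simp at h0
    rw [abs_of_nonneg h0]
    exact hρ i
  · have hsym : S j i = S i j := by
      have := hS.1
      have := congrFun (congrFun this j) i
      simpa [conjTranspose_apply] using this.symm
    have key : ∀ c : ℝ, 0 ≤ S i i + 2 * c * S i j + c ^ 2 * S j j := by
      intro c
      have h0 := hS.dotProduct_mulVec_nonneg (Pi.single i 1 + Pi.single j c)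
      simp [mulVec_add, dotProduct_add, add_dotProduct, single_dotProduct,
        Pi.single_apply, hij, hij.symm, hsym] at h0
      nlinarith [h0]
    have h1 := key 1
    have h2 := key (-1)
    have hi := hρ i
    have hj := hρ j
    rw [abs_le]
    constructor <;> nlinarith

lemma main_ineq' {n : ℕ} (S : Matrix (Fin n) (Fin n) ℝ) (hS : S.PosSemidef)
    (ρ : ℝ) (hρ : ∀ i, S i i ≤ ρ) (z : Fin n → ℝ) (hz : ∑ i, (z i) ^ 2 ≤ 1) :
    z ⬝ᵥ S.mulVec z - ρ * (card z : ℝ) ≤ 0 := by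
  classical
  set T := Finset.univ.filter fun i => z i ≠ 0 with hT
  rcases T.eq_empty_or_nonempty with hTe | ⟨i0, hi0⟩
  · have hz0 : z = 0 := by
      funext i
      by_contra h
      simp only [Pi.zero_apply] at h
      exact absurd hTe (Finset.ne_empty_of_mem (show i ∈ T by simp [hT, h]))
    subst hz0
    simp [card_zero']
  · have hρ0 : 0 ≤ ρ := le_trans (abs_nonneg (S i0 i0)) (entry_abs_le' S hS ρ hρ i0 i0)
    have e1 : z ⬝ᵥ S.mulVec z = ∑ i, ∑ j, z i * (S i j * z j) := by
      simp [dotProduct, mulVec, Finset.mul_sum]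
    have stepA : ∑ i, ∑ j, z i * (S i j * z j) ≤ ∑ i, ∑ j, |z i| * (ρ * |z j|) := by
      refine Finset.sum_le_sum fun i _ => Finset.sum_le_sum fun j _ => ?_
      calc z i * (S i j * z j) ≤ |z i * (S i j * z j)| := le_abs_self _
        _ = |z i| * (|S i j| * |z j|) := by rw [abs_mul, abs_mul]
        _ ≤ |z i| * (ρ * |z j|) := by
            gcongr
            exact entry_abs_le' S hS ρ hρ i j
    have stepB : ∑ i, ∑ j, |z i| * (ρ * |z j|) = ρ * (∑ i, |z i|) ^ 2 := by
      rw [sq, Finset.sum_mul_sum, Finset.mul_sum]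
      refine Finset.sum_congr rfl fun i _ => ?_
      rw [Finset.mul_sum]
      exact Finset.sum_congr rfl fun j _ => by ring
    have hsupp : ∑ i, |z i| = ∑ i ∈ T, |z i| :=
      (Finset.sum_subset (Finset.subset_univ T) (fun x _ hx => by
        simp only [hT, Finset.mem_filter, Finset.mem_univ, true_and, not_not] at hx
        simp [hx])).symm
    have stepC : (∑ i, |z i|) ^ 2 ≤ (card z : ℝ) := by
      rw [hsupp]
      have cs := Finset.sum_mul_sq_le_sq_mul_sq T (fun i => |z i|) (fun _ => 1)
      simp only [mul_one, one_pow, sq_abs] at cs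
      have h1 : ∑ i ∈ T, z i ^ 2 ≤ 1 := by
        refine le_trans (Finset.sum_le_sum_of_subset_of_nonneg (Finset.subset_univ T)
          (fun i _ _ => sq_nonneg _)) hz
      have h2 : (∑ i ∈ T, (1:ℝ)) = (card z : ℝ) := by simp [card, hT]
      calc (∑ i ∈ T, |z i|) ^ 2 ≤ (∑ i ∈ T, z i ^ 2) * ∑ i ∈ T, (1:ℝ) := cs
        _ ≤ 1 * (card z : ℝ) := by
            rw [h2]
            exact mul_le_mul_of_nonneg_right h1 (Nat.cast_nonneg _)
        _ = (card z : ℝ) := one_mul _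
    have final : z ⬝ᵥ S.mulVec z ≤ ρ * (card z : ℝ) := by
      rw [e1]
      calc ∑ i, ∑ j, z i * (S i j * z j) ≤ ρ * (∑ i, |z i|) ^ 2 := stepA.trans_eq stepB
        _ ≤ ρ * (card z : ℝ) := mul_le_mul_of_nonneg_left stepC hρ0
    linarith

/-- if `ρ ≥ max_i Σ_ii` then every feasible `z` has nonpositive objective,
the sparse PCA value `φ(ρ)` is `0`, and it is attained at `z = 0`. -/
theorem sparsePCA_value_eq_zero_of_rho_ge_max_diag {n : ℕ}
    (S : Matrix (Fin n) (Fin n) ℝ) (hS : S.PosSemidef)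
    (ρ : ℝ) (hρ : ∀ i, S i i ≤ ρ) :
    (∀ z : Fin n → ℝ, ∑ i, (z i) ^ 2 ≤ 1 → z ⬝ᵥ S.mulVec z - ρ * (card z : ℝ) ≤ 0) ∧
    sSup {v : ℝ | ∃ z : Fin n → ℝ, ∑ i, (z i) ^ 2 ≤ 1 ∧
        v = z ⬝ᵥ S.mulVec z - ρ * (card z : ℝ)} = 0 ∧
    (0 : Fin n → ℝ) ⬝ᵥ S.mulVec 0 - ρ * (card (0 : Fin n → ℝ) : ℝ) = 0 := by
  have hmain := main_ineq' S hS ρ hρ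
  have hmem : (0 : ℝ) ∈ {v : ℝ | ∃ z : Fin n → ℝ, ∑ i, (z i) ^ 2 ≤ 1 ∧
      v = z ⬝ᵥ S.mulVec z - ρ * (card z : ℝ)} :=
    ⟨0, by simp, by simp [card_zero']⟩
  have hub : ∀ v ∈ {v : ℝ | ∃ z : Fin n → ℝ, ∑ i, (z i) ^ 2 ≤ 1 ∧
      v = z ⬝ᵥ S.mulVec z - ρ * (card z : ℝ)}, v ≤ 0 := by
    rintro v ⟨z, hz, rfl⟩
    exact hmain z hz
  refine ⟨hmain, le_antisymm (Real.sSup_le hub le_rfl) (le_csSup ⟨0, hub⟩ hmem), ?_⟩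
  simp [card_zero']
end

section
/- (Proposition 2, sufficient global optimality conditions.) Let A ∈ ℝ^{n×n} with columns a₁,…,aₙ, Σ = AᵀA, and let I ⊆ {1,…,n} be nonempty with complement I^c. Let x be a unit leading eigenvector of ∑_{i∈I} aᵢaᵢᵀ (i.e., (∑_{i∈I} aᵢaᵢᵀ)x = λ_max(∑_{i∈I} aᵢaᵢᵀ)x, ‖x‖₂=1). Suppose there exists ρ* ≥ 0 such that: (i) max_{i∈I^c} (aᵢᵀx)² < ρ* < min_{i∈I} (aᵢᵀx)², and (ii) λ_max(∑_{i=1}^n Yᵢ) ≤ ∑_{i∈I} ((aᵢᵀx)² − ρ*), where, with Bᵢ = aᵢaᵢᵀ − ρ*I, Yᵢ = max{0, ρ*(aᵢᵀaᵢ − ρ*)/(ρ* − (aᵢᵀx)²)} · (I − xxᵀ)aᵢaᵢᵀ(I − xxᵀ)/‖(I − xxᵀ)aᵢ‖² for i ∈ I^c (with Yᵢ = 0 when (I−xxᵀ)aᵢ = 0), and Yᵢ = Bᵢxxᵀ Bᵢ/(xᵀBᵢx) for i ∈ I. Then the sparsity pattern I is globally optimal for the sparse PCA problem with penalty ρ*: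 for every z ∈ ℝⁿ with ‖z‖₂ ≤ 1, zᵀΣz − ρ*·Card(z) ≤ λ_max(∑_{i∈I} aᵢaᵢᵀ) − ρ*·|I|, and this value is attained by the vector z maximizing zᵀΣz over unit vectors supported on I. -/
open Matrix

section Helpers

lemma sq_sum_pos' {n : ℕ} {v : Fin n → ℝ} (hv : v ≠ 0) : 0 < ∑ i, v i ^ 2 := by
  obtain ⟨i, hi⟩ := Function.ne_iff.mp hv
  exact Finset.sum_pos' (fun j _ => sq_nonneg _)
    ⟨i, Finset.mem_univ i, lt_of_le_of_ne (sq_nonneg _) (Ne.symm (pow_ne_zero 2 hi))⟩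

lemma smul_one_sub_psd {n : ℕ} {M : Matrix (Fin n) (Fin n) ℝ} (hM : M.IsHermitian)
    {μ : ℝ} (hμ : ∀ i, hM.eigenvalues i ≤ μ) :
    (μ • (1 : Matrix (Fin n) (Fin n) ℝ) - M).PosSemidef := by
  have hU : (hM.eigenvectorUnitary : Matrix (Fin n) (Fin n) ℝ) *
      (star (hM.eigenvectorUnitary : Matrix (Fin n) (Fin n) ℝ)) = 1 :=
    (Matrix.mem_unitaryGroup_iff).mp hM.eigenvectorUnitary.2
  have h2 : (Matrix.diagonal (fun i => μ - hM.eigenvalues i)) =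
      μ • (1 : Matrix (Fin n) (Fin n) ℝ) - Matrix.diagonal (RCLike.ofReal ∘ hM.eigenvalues) := by
    ext i j
    by_cases h : i = j <;> simp [Matrix.diagonal, h]
  have key : μ • (1 : Matrix (Fin n) (Fin n) ℝ) - M =
      (hM.eigenvectorUnitary : Matrix (Fin n) (Fin n) ℝ) *
        (Matrix.diagonal (fun i => μ - hM.eigenvalues i)) *
        (star (hM.eigenvectorUnitary : Matrix (Fin n) (Fin n) ℝ)) := by
    conv_lhs => rw [hM.spectral_theorem, Unitary.conjStarAlgAut_apply]
    rw [h2, Matrix.mul_sub, Matrix.sub_mul, Matrix.mul_smul, Matrix.mul_one, Matrix.smul_mul, hU]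
  rw [key]
  have hdiag : (Matrix.diagonal (fun i => μ - hM.eigenvalues i)).PosSemidef :=
    Matrix.PosSemidef.diagonal (fun i => by simpa using hμ i)
  have := hdiag.mul_mul_conjTranspose_same (hM.eigenvectorUnitary : Matrix (Fin n) (Fin n) ℝ)
  simpa [Matrix.star_eq_conjTranspose] using this

lemma rayleigh_aux {n : ℕ} {M : Matrix (Fin n) (Fin n) ℝ} (hM : M.IsHermitian)
    {μ : ℝ} (hμ : ∀ i, hM.eigenvalues i ≤ μ) (v : Fin n → ℝ) :
    v ⬝ᵥ M.mulVec v ≤ μ * ∑ i, v i ^ 2 := by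
  have h := (smul_one_sub_psd hM hμ).dotProduct_mulVec_nonneg v
  simp only [star_trivial, Matrix.sub_mulVec, Matrix.smul_mulVec, Matrix.one_mulVec,
    dotProduct_sub, dotProduct_smul] at h
  have hvv : v ⬝ᵥ v = ∑ i, v i ^ 2 := by simp [dotProduct, pow_two]
  rw [hvv] at h
  simp only [smul_eq_mul] at h
  linarith

lemma lambdaMax_rayleigh {n : ℕ} (hn : n ≠ 0) {M : Matrix (Fin n) (Fin n) ℝ}
    (hM : M.IsHermitian) (v : Fin n → ℝ) :
    v ⬝ᵥ M.mulVec v ≤ lambdaMax M * ∑ i, v i ^ 2 := by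
  have hne : (Finset.univ : Finset (Fin n)).Nonempty := by
    haveI : NeZero n := ⟨hn⟩
    exact Finset.univ_nonempty
  set μ := Finset.univ.sup' hne hM.eigenvalues with hμdef
  have hμ : ∀ i, hM.eigenvalues i ≤ μ := fun i => Finset.le_sup' _ (Finset.mem_univ i)
  have hgreat : IsGreatest {t : ℝ | ∃ v : Fin n → ℝ, v ≠ 0 ∧ M.mulVec v = t • v} μ := by
    constructor
    · obtain ⟨i₀, -, hi₀⟩ := Finset.exists_mem_eq_sup' hne hM.eigenvalues
      refine ⟨⇑(hM.eigenvectorBasis i₀), ?_, ?_⟩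
      · intro h
        refine hM.eigenvectorBasis.toBasis.ne_zero i₀ ?_
        rw [OrthonormalBasis.coe_toBasis]
        ext j
        exact congrFun h j
      · rw [hM.mulVec_eigenvectorBasis, hμdef, hi₀]
    · rintro t ⟨w, hw, hMw⟩
      have h1 : w ⬝ᵥ M.mulVec w ≤ μ * ∑ i, w i ^ 2 := rayleigh_aux hM hμ w
      have h2 : w ⬝ᵥ M.mulVec w = t * ∑ i, w i ^ 2 := by
        rw [hMw]
        simp [dotProduct, pow_two, Finset.mul_sum, mul_left_comm, mul_comm]
      nlinarith [sq_sum_pos' hw]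
  have : lambdaMax M = μ := hgreat.csSup_eq
  rw [this]
  exact rayleigh_aux hM hμ v

lemma vecMulVec_mulVec' {n : ℕ} (v w u : Fin n → ℝ) :
    (vecMulVec v w).mulVec u = (w ⬝ᵥ u) • v := by
  ext j
  simp only [Matrix.mulVec, dotProduct, Matrix.vecMulVec_apply, Pi.smul_apply, smul_eq_mul,
    Finset.sum_mul]
  exact Finset.sum_congr rfl fun k _ => by ring

lemma sum_mulVec' {n : ℕ} {ι : Type*} (s : Finset ι) (M : ι → Matrix (Fin n) (Fin n) ℝ)
    (v : Fin n → ℝ) : (∑ i ∈ s, M i).mulVec v = ∑ i ∈ s, (M i).mulVec v := by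
  ext j
  simp only [Matrix.mulVec, dotProduct, Finset.sum_apply, Matrix.sum_apply, Finset.sum_mul]
  exact Finset.sum_comm

lemma dotProduct_sum' {n : ℕ} {ι : Type*} (s : Finset ι) (v : Fin n → ℝ) (w : ι → Fin n → ℝ) :
    v ⬝ᵥ (∑ i ∈ s, w i) = ∑ i ∈ s, v ⬝ᵥ w i := by
  simp only [dotProduct, Finset.sum_apply, Finset.mul_sum]
  exact Finset.sum_comm

lemma quadform_in' {n : ℕ} (a x u : Fin n → ℝ) (ρ : ℝ) :
    u ⬝ᵥ (((vecMulVec a a - ρ • (1 : Matrix (Fin n) (Fin n) ℝ)) * vecMulVec x x *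
        (vecMulVec a a - ρ • (1 : Matrix (Fin n) (Fin n) ℝ))).mulVec u)
      = ((a ⬝ᵥ x) * (a ⬝ᵥ u) - ρ * (x ⬝ᵥ u)) ^ 2 := by
  simp only [← Matrix.mulVec_mulVec]
  simp only [Matrix.sub_mulVec, Matrix.smul_mulVec, Matrix.one_mulVec,
    vecMulVec_mulVec', Matrix.mulVec_sub, Matrix.mulVec_smul, dotProduct_sub, dotProduct_smul,
    sub_dotProduct, smul_dotProduct, smul_sub, smul_smul, smul_eq_mul]
  rw [dotProduct_comm x a, dotProduct_comm u a, dotProduct_comm u x]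
  ring

lemma quadform_out' {n : ℕ} (a x u : Fin n → ℝ) :
    u ⬝ᵥ (((1 - vecMulVec x x) * vecMulVec a a * (1 - vecMulVec x x)).mulVec u)
      = (a ⬝ᵥ u - (a ⬝ᵥ x) * (x ⬝ᵥ u)) ^ 2 := by
  simp only [← Matrix.mulVec_mulVec]
  simp only [Matrix.sub_mulVec, Matrix.smul_mulVec, Matrix.one_mulVec,
    vecMulVec_mulVec', Matrix.mulVec_sub, Matrix.mulVec_smul, dotProduct_sub, dotProduct_smul,
    sub_dotProduct, smul_dotProduct, smul_sub, smul_smul, smul_eq_mul]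
  rw [dotProduct_comm x a, dotProduct_comm u a, dotProduct_comm u x]
  ring

lemma in_scalar (ρ α β γ : ℝ) (hρ0 : 0 ≤ ρ) (hα : ρ < α ^ 2) (hγ : γ ^ 2 ≤ 1) :
    (β ^ 2 - ρ) * (α ^ 2 - ρ) ≤ (α * β - ρ * γ) ^ 2 := by
  nlinarith [mul_nonneg hρ0 (sq_nonneg (β - α * γ)),
    mul_nonneg (mul_nonneg hρ0 (sub_nonneg.2 hγ)) (le_of_lt (sub_pos.2 hα))]

lemma out_scalar (ρ α k2 γ t μ : ℝ) (hρ : 0 < ρ) (hk2 : 0 < k2)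
    (hμ0 : 0 ≤ μ) (hμ : ρ * (α ^ 2 + k2 - ρ) ≤ μ * (ρ - α ^ 2))
    (hbes : k2 * γ ^ 2 + t ^ 2 ≤ k2) :
    ((α * γ + t) ^ 2 - ρ) * k2 ≤ μ * t ^ 2 := by
  have E1 : ρ*k2*(ρ+μ)*(α*γ+t)^2 ≤ (α^2*(ρ+μ) + ρ*k2) * (ρ*k2*γ^2 + (ρ+μ)*t^2) := by
    nlinarith [sq_nonneg (ρ*k2*γ - (ρ+μ)*α*t)]
  have E2 : α^2*(ρ+μ) + ρ*k2 ≤ ρ*(ρ+μ) := by nlinarith [hμ]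
  have hQ : 0 ≤ ρ*k2*γ^2 + (ρ+μ)*t^2 := by positivity
  have E3 : (α^2*(ρ+μ) + ρ*k2) * (ρ*k2*γ^2 + (ρ+μ)*t^2) ≤
      ρ*(ρ+μ) * (ρ*k2*γ^2 + (ρ+μ)*t^2) := mul_le_mul_of_nonneg_right E2 hQ
  have E4 : ρ*k2*γ^2 + (ρ+μ)*t^2 ≤ ρ*k2 + μ*t^2 := by
    nlinarith [mul_le_mul_of_nonneg_left hbes hρ.le]
  have E5 : ρ*(ρ+μ) * (ρ*k2*γ^2 + (ρ+μ)*t^2) ≤ ρ*(ρ+μ) * (ρ*k2 + μ*t^2) :=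
    mul_le_mul_of_nonneg_left E4 (by positivity)
  have hpos : 0 < ρ*(ρ+μ) := by positivity
  have key : ρ*(ρ+μ) * (k2*(α*γ+t)^2) ≤ ρ*(ρ+μ) * (ρ*k2 + μ*t^2) := by nlinarith [E1, E3, E5]
  have := le_of_mul_le_mul_left key hpos
  linarith

lemma dot_self_eq' {n : ℕ} (v : Fin n → ℝ) : v ⬝ᵥ v = ∑ i, v i ^ 2 := by
  simp [dotProduct, pow_two]

lemma cs_one {n : ℕ} {x u : Fin n → ℝ} (hx : ∑ i, x i ^ 2 = 1) (hu : ∑ i, u i ^ 2 = 1) :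
    (x ⬝ᵥ u) ^ 2 ≤ 1 := by
  have := Finset.sum_mul_sq_le_sq_mul_sq Finset.univ x u
  rw [hx, hu] at this
  simpa [dotProduct] using this

lemma Ybound_in {n : ℕ} (a x u : Fin n → ℝ) (ρ : ℝ) (hρ0 : 0 ≤ ρ)
    (hx : ∑ i, x i ^ 2 = 1) (hu : ∑ i, u i ^ 2 = 1) (hα : ρ < (a ⬝ᵥ x) ^ 2)
    {B : Matrix (Fin n) (Fin n) ℝ} (hB : B = vecMulVec a a - ρ • (1 : Matrix (Fin n) (Fin n) ℝ)) :
    0 ≤ u ⬝ᵥ ((x ⬝ᵥ B.mulVec x)⁻¹ • (B * vecMulVec x x * B)).mulVec u ∧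
    (a ⬝ᵥ u) ^ 2 - ρ ≤ u ⬝ᵥ ((x ⬝ᵥ B.mulVec x)⁻¹ • (B * vecMulVec x x * B)).mulVec u := by
  subst hB
  have hxx : x ⬝ᵥ x = 1 := by rw [dot_self_eq', hx]
  have hc : x ⬝ᵥ (vecMulVec a a - ρ • (1 : Matrix (Fin n) (Fin n) ℝ)).mulVec x
      = (a ⬝ᵥ x) ^ 2 - ρ := by
    rw [Matrix.sub_mulVec, Matrix.smul_mulVec, Matrix.one_mulVec, vecMulVec_mulVec']
    rw [dotProduct_sub, dotProduct_smul, dotProduct_smul, dotProduct_comm x a, hxx]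
    simp [pow_two]
  have hform : u ⬝ᵥ ((x ⬝ᵥ (vecMulVec a a - ρ • (1 : Matrix (Fin n) (Fin n) ℝ)).mulVec x)⁻¹ •
        ((vecMulVec a a - ρ • (1 : Matrix (Fin n) (Fin n) ℝ)) * vecMulVec x x *
          (vecMulVec a a - ρ • (1 : Matrix (Fin n) (Fin n) ℝ)))).mulVec u
      = ((a ⬝ᵥ x) ^ 2 - ρ)⁻¹ * ((a ⬝ᵥ x) * (a ⬝ᵥ u) - ρ * (x ⬝ᵥ u)) ^ 2 := by
    rw [Matrix.smul_mulVec, dotProduct_smul, hc, quadform_in', smul_eq_mul]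
  rw [hform]
  have hcpos : 0 < (a ⬝ᵥ x) ^ 2 - ρ := by linarith
  constructor
  · positivity
  · rw [inv_mul_eq_div, le_div_iff₀ hcpos]
    exact in_scalar ρ (a ⬝ᵥ x) (a ⬝ᵥ u) (x ⬝ᵥ u) hρ0 hα (cs_one hx hu)

lemma Ybound_out {n : ℕ} (a x u : Fin n → ℝ) (ρ : ℝ)
    (hx : ∑ i, x i ^ 2 = 1) (hu : ∑ i, u i ^ 2 = 1) (hα : (a ⬝ᵥ x) ^ 2 < ρ)
    {Yi : Matrix (Fin n) (Fin n) ℝ}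
    (hY : Yi = if (1 - vecMulVec x x).mulVec a = 0 then 0 else
        (max 0 (ρ * (a ⬝ᵥ a - ρ) / (ρ - (a ⬝ᵥ x) ^ 2)) /
            ∑ j, ((1 - vecMulVec x x).mulVec a j) ^ 2) •
          ((1 - vecMulVec x x) * vecMulVec a a * (1 - vecMulVec x x))) :
    0 ≤ u ⬝ᵥ Yi.mulVec u ∧ (a ⬝ᵥ u) ^ 2 - ρ ≤ u ⬝ᵥ Yi.mulVec u := by
  have hρpos : 0 < ρ := lt_of_le_of_lt (sq_nonneg _) hα
  set α := a ⬝ᵥ x with hαdef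
  set γ := x ⬝ᵥ u with hγdef
  set β := a ⬝ᵥ u with hβdef
  have hγ1 : γ ^ 2 ≤ 1 := cs_one hx hu
  set c := (1 - vecMulVec x x).mulVec a with hcdef
  have hcj : ∀ j, c j = a j - α * x j := by
    intro j
    rw [hcdef, Matrix.sub_mulVec, Matrix.one_mulVec, vecMulVec_mulVec', dotProduct_comm x a]
    simp [hαdef]
  by_cases hc0 : c = 0
  · rw [hY, if_pos hc0]
    have haj : ∀ j, a j = α * x j := by
      intro j
      have h := hcj j
      rw [hc0] at h
      have h' : (0 : ℝ) = a j - α * x j := h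
      linarith
    have hβγ : β = α * γ := by
      rw [hβdef, hγdef]
      simp only [dotProduct, Finset.mul_sum]
      exact Finset.sum_congr rfl fun j _ => by rw [haj j]; ring
    have hb2 : β ^ 2 ≤ ρ := by
      rw [hβγ]
      nlinarith [sq_nonneg α]
    constructor
    · simp [Matrix.zero_mulVec]
    · simp only [Matrix.zero_mulVec, dotProduct_zero]
      linarith
  · set k2 := ∑ j, c j ^ 2 with hk2def
    have hk2 : 0 < k2 := sq_sum_pos' hc0
    set μ := max 0 (ρ * (a ⬝ᵥ a - ρ) / (ρ - α ^ 2)) with hμdef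
    have hμ0 : 0 ≤ μ := le_max_left _ _
    have hsax : ∑ j, a j * x j = α := by rw [hαdef]; rfl
    have hsxu : ∑ j, x j * u j = γ := by rw [hγdef]; rfl
    have hsaa : ∑ j, a j * a j = a ⬝ᵥ a := rfl
    have hsau : ∑ j, a j * u j = β := by rw [hβdef]; rfl
    have hk2' : k2 = a ⬝ᵥ a - α ^ 2 := by
      rw [hk2def, ← hsaa]
      have h : ∀ j, c j ^ 2 = a j * a j - 2 * α * (a j * x j) + α ^ 2 * x j ^ 2 := by
        intro j; rw [hcj j]; ring
      rw [Finset.sum_congr rfl fun j _ => h j]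
      simp only [Finset.sum_add_distrib, Finset.sum_sub_distrib, ← Finset.mul_sum, hsax, hx]
      ring
    have hμ' : ρ * (α ^ 2 + k2 - ρ) ≤ μ * (ρ - α ^ 2) := by
      have hd : 0 < ρ - α ^ 2 := by linarith
      have h1 : ρ * (a ⬝ᵥ a - ρ) / (ρ - α ^ 2) ≤ μ := le_max_right _ _
      have h2 := (div_le_iff₀ hd).mp h1
      rw [hk2']
      calc ρ * (α ^ 2 + (a ⬝ᵥ a - α ^ 2) - ρ) = ρ * (a ⬝ᵥ a - ρ) := by ring
        _ ≤ μ * (ρ - α ^ 2) := h2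
    set t := β - α * γ with htdef
    have hscu : ∑ j, c j * u j = t := by
      rw [htdef, ← hsau, ← hsxu]
      rw [Finset.mul_sum, ← Finset.sum_sub_distrib]
      exact Finset.sum_congr rfl fun j _ => by rw [hcj j]; ring
    have hscx : ∑ j, c j * x j = 0 := by
      have h : ∀ j, c j * x j = a j * x j - α * x j ^ 2 := by intro j; rw [hcj j]; ring
      rw [Finset.sum_congr rfl fun j _ => h j]
      simp only [Finset.sum_sub_distrib, ← Finset.mul_sum, hsax, hx]
      ring
    have hbes : k2 * γ ^ 2 + t ^ 2 ≤ k2 := by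
      have h0 : 0 ≤ ∑ j, (k2 * (u j - γ * x j) - t * c j) ^ 2 :=
        Finset.sum_nonneg fun j _ => sq_nonneg _
      have hexp : ∀ j, (k2 * (u j - γ * x j) - t * c j) ^ 2 =
          k2 ^ 2 * u j ^ 2 + k2 ^ 2 * γ ^ 2 * x j ^ 2 + t ^ 2 * c j ^ 2
            - 2 * k2 ^ 2 * γ * (x j * u j) - 2 * k2 * t * (c j * u j)
            + 2 * k2 * γ * t * (c j * x j) := by
        intro j; ring
      rw [Finset.sum_congr rfl fun j _ => hexp j] at h0
      simp only [Finset.sum_add_distrib, Finset.sum_sub_distrib, ← Finset.mul_sum,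
        hu, hx, hsxu, hscu, hscx, ← hk2def] at h0
      nlinarith [hk2, h0]
    have hform : u ⬝ᵥ Yi.mulVec u = (μ / k2) * t ^ 2 := by
      rw [hY, if_neg hc0, Matrix.smul_mulVec, dotProduct_smul, quadform_out',
        smul_eq_mul, ← hαdef, ← hβdef, ← hγdef, htdef]
    constructor
    · rw [hform]
      positivity
    · rw [hform]
      have hout := out_scalar ρ α k2 γ t μ hρpos hk2 hμ0 hμ' hbes
      have hβt : β = α * γ + t := by rw [htdef]; ring
      rw [hβt, div_mul_eq_mul_div, le_div_iff₀ hk2]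
      linarith

lemma isHermitian_of_transpose' {n : ℕ} {M : Matrix (Fin n) (Fin n) ℝ} (h : Mᵀ = M) :
    M.IsHermitian := by
  have : Mᴴ = Mᵀ := by
    ext i j
    simp [Matrix.conjTranspose_apply, Matrix.transpose_apply]
  show Mᴴ = M
  rw [this, h]

lemma vecMulVec_transpose' {n : ℕ} (v w : Fin n → ℝ) :
    (vecMulVec v w)ᵀ = vecMulVec w v := by
  ext i j
  simp [Matrix.vecMulVec_apply, mul_comm]

end Helpers

/-- Proposition 2: sufficient global optimality conditions for a
sparsity pattern `I` in the sparse PCA problem with penalty `ρ*`. -/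
theorem sparsity_pattern_globally_optimal {n : ℕ}
    (A : Matrix (Fin n) (Fin n) ℝ) (I : Finset (Fin n)) (hI : I.Nonempty)
    (a : Fin n → Fin n → ℝ) (ha : ∀ i, a i = fun j => A j i)
    (S : Matrix (Fin n) (Fin n) ℝ) (hS : S = Aᵀ * A)
    (x : Fin n → ℝ) (hx : ∑ i, (x i) ^ 2 = 1)
    (hxeig : (∑ i ∈ I, vecMulVec (a i) (a i)).mulVec x =
      lambdaMax (∑ i ∈ I, vecMulVec (a i) (a i)) • x)
    (ρ : ℝ) (hρ0 : 0 ≤ ρ)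
    (hsep_out : ∀ i ∉ I, (a i ⬝ᵥ x) ^ 2 < ρ)
    (hsep_in : ∀ i ∈ I, ρ < (a i ⬝ᵥ x) ^ 2)
    (B : Fin n → Matrix (Fin n) (Fin n) ℝ)
    (hB : ∀ i, B i = vecMulVec (a i) (a i) - ρ • (1 : Matrix (Fin n) (Fin n) ℝ))
    (Y : Fin n → Matrix (Fin n) (Fin n) ℝ)
    (hYout : ∀ i ∉ I,
      Y i = if (1 - vecMulVec x x).mulVec (a i) = 0 then 0 else
        (max 0 (ρ * (a i ⬝ᵥ a i - ρ) / (ρ - (a i ⬝ᵥ x) ^ 2)) /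
            ∑ j, ((1 - vecMulVec x x).mulVec (a i) j) ^ 2) •
          ((1 - vecMulVec x x) * vecMulVec (a i) (a i) * (1 - vecMulVec x x)))
    (hYin : ∀ i ∈ I, Y i = (x ⬝ᵥ (B i).mulVec x)⁻¹ • (B i * vecMulVec x x * B i))
    (hgap : lambdaMax (∑ i, Y i) ≤ ∑ i ∈ I, ((a i ⬝ᵥ x) ^ 2 - ρ)) :
    (∀ z : Fin n → ℝ, ∑ i, (z i) ^ 2 ≤ 1 →
      z ⬝ᵥ S.mulVec z - ρ * (card z : ℝ) ≤
        lambdaMax (∑ i ∈ I, vecMulVec (a i) (a i)) - ρ * (I.card : ℝ)) ∧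
    (∀ z : Fin n → ℝ, ∑ i, (z i) ^ 2 = 1 → (∀ i ∉ I, z i = 0) →
      (∀ w : Fin n → ℝ, ∑ i, (w i) ^ 2 = 1 → (∀ i ∉ I, w i = 0) →
        w ⬝ᵥ S.mulVec w ≤ z ⬝ᵥ S.mulVec z) →
      z ⬝ᵥ S.mulVec z - ρ * (card z : ℝ) =
        lambdaMax (∑ i ∈ I, vecMulVec (a i) (a i)) - ρ * (I.card : ℝ)) := by
  classical
  set M := ∑ i ∈ I, vecMulVec (a i) (a i) with hMdef
  set lam := lambdaMax M with hlamdef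
  have hn : n ≠ 0 := by
    rintro rfl
    obtain ⟨i, -⟩ := hI
    exact i.elim0
  have hxx : x ⬝ᵥ x = 1 := by rw [dot_self_eq', hx]
  have hMx : x ⬝ᵥ M.mulVec x = lam := by
    rw [hxeig, dotProduct_smul, smul_eq_mul, hxx, mul_one]
  have hMx2 : x ⬝ᵥ M.mulVec x = ∑ i ∈ I, (a i ⬝ᵥ x) ^ 2 := by
    rw [hMdef, sum_mulVec', dotProduct_sum']
    refine Finset.sum_congr rfl fun i hi => ?_
    rw [vecMulVec_mulVec', dotProduct_smul, smul_eq_mul, dotProduct_comm x (a i), pow_two]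
  have hlamval : lam = ∑ i ∈ I, (a i ⬝ᵥ x) ^ 2 := by rw [← hMx, hMx2]
  have hsig : ∑ i ∈ I, ((a i ⬝ᵥ x) ^ 2 - ρ) = lam - ρ * I.card := by
    rw [Finset.sum_sub_distrib, Finset.sum_const, ← hlamval, nsmul_eq_mul]
    ring
  have hBt : ∀ i, (vecMulVec (a i) (a i) - ρ • (1 : Matrix (Fin n) (Fin n) ℝ))ᵀ
      = vecMulVec (a i) (a i) - ρ • 1 := by
    intro i
    rw [Matrix.transpose_sub, Matrix.transpose_smul, Matrix.transpose_one, vecMulVec_transpose']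
  have hPt : (1 - vecMulVec x x : Matrix (Fin n) (Fin n) ℝ)ᵀ = 1 - vecMulVec x x := by
    rw [Matrix.transpose_sub, Matrix.transpose_one, vecMulVec_transpose']
  have hYt : ∀ i, (Y i)ᵀ = Y i := by
    intro i
    by_cases hi : i ∈ I
    · rw [hYin i hi, hB i, Matrix.transpose_smul, Matrix.transpose_mul, Matrix.transpose_mul,
        hBt i, vecMulVec_transpose', mul_assoc]
    · rw [hYout i hi]
      split_ifs with h
      · simp
      · rw [Matrix.transpose_smul, Matrix.transpose_mul, Matrix.transpose_mul, hPt,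
          vecMulVec_transpose', mul_assoc]
  have hherm : (∑ i, Y i).IsHermitian := isHermitian_of_transpose' (by
    rw [Matrix.transpose_sum]
    exact Finset.sum_congr rfl fun i _ => hYt i)
  have hσ0 : 0 ≤ ∑ i ∈ I, ((a i ⬝ᵥ x) ^ 2 - ρ) :=
    Finset.sum_nonneg fun i hi => by linarith [hsep_in i hi]
  have part1 : ∀ z : Fin n → ℝ, ∑ i, (z i) ^ 2 ≤ 1 →
      z ⬝ᵥ S.mulVec z - ρ * (card z : ℝ) ≤ lam - ρ * (I.card : ℝ) := by
    intro z hz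
    by_cases hAz : A.mulVec z = 0
    · have hSz : z ⬝ᵥ S.mulVec z = 0 := by
        rw [hS, ← Matrix.mulVec_mulVec, hAz, Matrix.mulVec_zero, dotProduct_zero]
      have h1 : 0 ≤ ρ * (card z : ℝ) := mul_nonneg hρ0 (Nat.cast_nonneg _)
      have h2 := hσ0
      rw [hsig] at h2
      rw [hSz]
      linarith
    · set w := A.mulVec z with hwdef
      have hN2 : 0 < ∑ j, w j ^ 2 := sq_sum_pos' hAz
      set N2 := ∑ j, w j ^ 2 with hN2def
      have hzSz : z ⬝ᵥ S.mulVec z = N2 := by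
        rw [hS, ← Matrix.mulVec_mulVec, dotProduct_mulVec, vecMul_transpose, ← hwdef,
          dot_self_eq', ← hN2def]
      have hs2 : Real.sqrt N2 ^ 2 = N2 := Real.sq_sqrt hN2.le
      have hspos : 0 < Real.sqrt N2 := Real.sqrt_pos.mpr hN2
      set u := (Real.sqrt N2)⁻¹ • w with hudef
      have hu : ∑ j, u j ^ 2 = 1 := by
        have hpt : ∀ j, u j ^ 2 = (Real.sqrt N2)⁻¹ ^ 2 * w j ^ 2 := by
          intro j
          rw [hudef]
          simp only [Pi.smul_apply, smul_eq_mul]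
          ring
        rw [Finset.sum_congr rfl fun j _ => hpt j, ← Finset.mul_sum, ← hN2def, inv_pow, hs2]
        exact inv_mul_cancel₀ (ne_of_gt hN2)
      have hYb : ∀ i, 0 ≤ u ⬝ᵥ (Y i).mulVec u ∧
          (a i ⬝ᵥ u) ^ 2 - ρ ≤ u ⬝ᵥ (Y i).mulVec u := by
        intro i
        by_cases hi : i ∈ I
        · rw [hYin i hi]
          exact Ybound_in (a i) x u ρ hρ0 hx hu (hsep_in i hi) (hB i)
        · exact Ybound_out (a i) x u ρ hx hu (hsep_out i hi) (hYout i hi)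
      set T := (Finset.univ.filter fun i => z i ≠ 0) with hTdef
      have hcard : card z = T.card := by
        unfold card
        rw [hTdef]
      have hzT : ∀ i ∉ T, z i = 0 := by
        intro i hi
        by_contra h
        exact hi (Finset.mem_filter.mpr ⟨Finset.mem_univ i, h⟩)
      have hfull : ∑ i, z i * (a i ⬝ᵥ w) = N2 := by
        have hstep : ∀ j, (∑ i, z i * (A j i * w j)) = w j ^ 2 := by
          intro j
          have hwj : w j = ∑ i, A j i * z i := by rw [hwdef]; rfl
          calc ∑ i, z i * (A j i * w j) = (∑ i, A j i * z i) * w j := by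
                rw [Finset.sum_mul]
                exact Finset.sum_congr rfl fun i _ => by ring
            _ = w j * w j := by rw [← hwj]
            _ = w j ^ 2 := (pow_two _).symm
        calc ∑ i, z i * (a i ⬝ᵥ w) = ∑ i, ∑ j, z i * (A j i * w j) := by
              refine Finset.sum_congr rfl fun i _ => ?_
              rw [ha i]
              simp [dotProduct, Finset.mul_sum]
          _ = ∑ j, ∑ i, z i * (A j i * w j) := Finset.sum_comm
          _ = ∑ j, w j ^ 2 := Finset.sum_congr rfl fun j _ => hstep j
          _ = N2 := by rw [hN2def]
      have h1 : ∑ i ∈ T, z i * (a i ⬝ᵥ w) = N2 := by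
        rw [← hfull]
        exact Finset.sum_subset (Finset.subset_univ T)
          (fun i _ hiT => by rw [hzT i hiT, zero_mul])
      have hcs := Finset.sum_mul_sq_le_sq_mul_sq T z (fun i => a i ⬝ᵥ w)
      rw [h1] at hcs
      have hz2 : ∑ i ∈ T, z i ^ 2 ≤ 1 :=
        le_trans (Finset.sum_le_sum_of_subset_of_nonneg (Finset.subset_univ T)
          fun i _ _ => sq_nonneg _) hz
      have hq0 : 0 ≤ ∑ i ∈ T, z i ^ 2 := Finset.sum_nonneg fun i _ => sq_nonneg _
      have hg0 : 0 ≤ ∑ i ∈ T, (a i ⬝ᵥ w) ^ 2 := Finset.sum_nonneg fun i _ => sq_nonneg _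
      have hG : N2 ^ 2 ≤ ∑ i ∈ T, (a i ⬝ᵥ w) ^ 2 := by
        nlinarith [hcs, hz2, hq0, hg0, mul_nonneg (sub_nonneg.2 hz2) hg0]
      have hG' : N2 ≤ (∑ i ∈ T, (a i ⬝ᵥ w) ^ 2) / N2 := by
        rw [le_div_iff₀ hN2]
        nlinarith [hG]
      have hau : ∀ i, (a i ⬝ᵥ u) ^ 2 = (a i ⬝ᵥ w) ^ 2 / N2 := by
        intro i
        rw [hudef, dotProduct_smul, smul_eq_mul, mul_pow, inv_pow, hs2, inv_mul_eq_div]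
      have hkey : z ⬝ᵥ S.mulVec z - ρ * (card z : ℝ) ≤ ∑ i ∈ T, ((a i ⬝ᵥ u) ^ 2 - ρ) := by
        rw [hzSz, hcard, Finset.sum_sub_distrib, Finset.sum_const, nsmul_eq_mul,
          Finset.sum_congr rfl fun i _ => hau i, ← Finset.sum_div]
        have : (T.card : ℝ) * ρ = ρ * (T.card : ℝ) := mul_comm _ _
        linarith [hG']
      have hstep2 : ∑ i ∈ T, ((a i ⬝ᵥ u) ^ 2 - ρ) ≤ ∑ i ∈ T, u ⬝ᵥ (Y i).mulVec u :=
        Finset.sum_le_sum fun i _ => (hYb i).2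
      have hstep3 : ∑ i ∈ T, u ⬝ᵥ (Y i).mulVec u ≤ ∑ i, u ⬝ᵥ (Y i).mulVec u :=
        Finset.sum_le_sum_of_subset_of_nonneg (Finset.subset_univ T)
          fun i _ _ => (hYb i).1
      have hray : ∑ i, u ⬝ᵥ (Y i).mulVec u = u ⬝ᵥ (∑ i, Y i).mulVec u := by
        rw [sum_mulVec', dotProduct_sum']
      have hfin : u ⬝ᵥ (∑ i, Y i).mulVec u ≤ lambdaMax (∑ i, Y i) := by
        have h := lambdaMax_rayleigh hn hherm u
        rw [hu, mul_one] at h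
        exact h
      have hlast := hgap
      rw [hsig] at hlast
      linarith
  refine ⟨part1, ?_⟩
  intro z hz1 hz0 hmax
  have hlampos : 0 < lam := by
    rw [hlamval]
    exact Finset.sum_pos (fun i hi => lt_of_le_of_lt hρ0 (hsep_in i hi)) hI
  set sl := Real.sqrt lam with hsldef
  have hsl2 : sl ^ 2 = lam := Real.sq_sqrt hlampos.le
  have hslpos : 0 < sl := Real.sqrt_pos.mpr hlampos
  set w := fun i => if i ∈ I then (a i ⬝ᵥ x) / sl else 0 with hwdef
  have hw0 : ∀ i ∉ I, w i = 0 := by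
    intro i hi
    simp only [hwdef]
    exact if_neg hi
  have hw1 : ∑ i, w i ^ 2 = 1 := by
    have hsum : ∑ i, w i ^ 2 = ∑ i ∈ I, (a i ⬝ᵥ x) ^ 2 / lam := by
      rw [← Finset.sum_subset (Finset.subset_univ I)
        (fun i _ hiI => by rw [hw0 i hiI]; exact zero_pow two_ne_zero)]
      refine Finset.sum_congr rfl fun i hi => ?_
      simp only [hwdef, if_pos hi]
      rw [div_pow, hsl2]
    rw [hsum, ← Finset.sum_div, ← hlamval, div_self (ne_of_gt hlampos)]
  have hMxj : ∀ j, M.mulVec x j = ∑ i ∈ I, (a i ⬝ᵥ x) * a i j := by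
    intro j
    rw [hMdef, sum_mulVec', Finset.sum_apply]
    refine Finset.sum_congr rfl fun i hi => ?_
    rw [vecMulVec_mulVec']
    simp
  have hAw : ∀ j, A.mulVec w j = sl * x j := by
    intro j
    have h1 : A.mulVec w j = ∑ i, w i * A j i := by
      rw [show A.mulVec w j = ∑ i, A j i * w i from rfl]
      exact Finset.sum_congr rfl fun i _ => mul_comm _ _
    rw [h1, ← Finset.sum_subset (Finset.subset_univ I)
      (fun i _ hiI => by rw [hw0 i hiI, zero_mul])]
    have h2 : ∑ i ∈ I, w i * A j i = (∑ i ∈ I, (a i ⬝ᵥ x) * a i j) / sl := by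
      rw [Finset.sum_div]
      refine Finset.sum_congr rfl fun i hi => ?_
      have haij : a i j = A j i := by rw [ha i]
      rw [← haij]
      simp only [hwdef, if_pos hi]
      rw [div_mul_eq_mul_div]
    rw [h2, ← hMxj j, hxeig]
    simp only [Pi.smul_apply, smul_eq_mul]
    rw [← hsl2]
    field_simp
  have hwS : w ⬝ᵥ S.mulVec w = lam := by
    rw [hS, ← Matrix.mulVec_mulVec, dotProduct_mulVec, vecMul_transpose]
    have hAweq : A.mulVec w = sl • x := funext fun j => by
      rw [hAw j]; simp
    rw [hAweq, smul_dotProduct, dotProduct_smul, smul_eq_mul, smul_eq_mul, hxx, ← hsl2]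
    ring
  have hzS : lam ≤ z ⬝ᵥ S.mulVec z := by
    rw [← hwS]
    exact hmax w hw1 hw0
  have hup := part1 z (le_of_eq hz1)
  have hcardle : (card z : ℝ) ≤ (I.card : ℝ) := by
    have hle : card z ≤ I.card := by
      unfold card
      apply Finset.card_le_card
      intro i hi
      rw [Finset.mem_filter] at hi
      by_contra hiI
      exact hi.2 (hz0 i hiI)
    exact_mod_cast hle
  have hmul : ρ * (card z : ℝ) ≤ ρ * (I.card : ℝ) := mul_le_mul_of_nonneg_left hcardle hρ0
  linarith
end
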